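/- Let D be a division ring and M = (m_1,…,m_r), N = (n_1,…,n_s) partitions of m and n. For every right submodule J of the nest module T_{(M,N)}(D) there exists a unique sequence (C_1,…,C_s) of right column reduced echelon matrices in M_m(D) such that: RCS(C_j) ⊆ RCS(C_{j+1}) for all 1 ≤ j < s; for each j, the i-th block row of C_j (rows partitioned according to M) is zero for all i > j; and J = {A ∈ M_{m×n}(D) : Col_j(A) ∈ C_j·M_{m×n_j}(D) for every 1 ≤ j ≤ s}, where C_j·M_{m×n_j}(D) := {C_j·Y : Y ∈ M_{m×n_j}(D)}. -/

import Mathlib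

/-!
Let `W_j` be the right subspace spanned by the block-`j` columns of the matrices of `J`. Right
multiplication by a matrix unit of `T_N` copies a column of block `j` into any column of a block
`j' ≥ j`; hence `W_j ⊆ W_{j'}`, and `J` is exactly the set of matrices whose block-`j` columns lie
in `W_j` for every `j` (such a matrix is a sum of single-column matrices of `J`). As
`J ⊆ T_{(M,N)}`, the vectors of `W_j` vanish on the row blocks `i > j`, and since no block is
empty, `J` determines the family `(W_j)`. It remains that `C · M_{m×n_j}(D)` is the set of
matrices with columns in `RCS C`, and that every right subspace is `RCS C` for exactly one right
column reduced echelon `C`: its pivots are the rows where some vector of the subspace starts, and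
a vector of the subspace is determined by its entries at the pivots.
-/

open Matrix Pointwise

/-- The left row space of a matrix: the span of its rows in the left `D`-module of
row vectors `Fin n → D`. -/
def LRS {D : Type*} [DivisionRing D] {ι : Type*} {n : ℕ} (A : Matrix ι (Fin n) D) :
    Submodule D (Fin n → D) :=
  Submodule.span D (Set.range A)

/-- The right column space of a matrix: the span of its columns in the right `D`-module
(i.e. `Dᵐᵒᵖ`-module) of column vectors `Fin m → D`. -/
def RCS {D : Type*} [DivisionRing D] {ι : Type*} {m : ℕ} (A : Matrix (Fin m) ι D) :
    Submodule Dᵐᵒᵖ (Fin m → D) :=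
  Submodule.span Dᵐᵒᵖ (Set.range Aᵀ)

/-- `R` is a left row reduced echelon matrix: for some `t ≤ m`, the rows with (0-based)
index `≥ t` are zero, each of the first `t` rows has first nonzero entry `1`, located in
column `k i`, the `k i` are strictly increasing, and column `k i` is zero outside row `i`. -/
def IsRowReducedEchelon {D : Type*} [DivisionRing D] {m n : ℕ}
    (R : Matrix (Fin m) (Fin n) D) : Prop :=
  ∃ (t : ℕ) (ht : t ≤ m) (k : Fin t → Fin n),
    StrictMono k ∧
    (∀ i : Fin m, t ≤ (i : ℕ) → R i = 0) ∧
    (∀ i : Fin t, R (Fin.castLE ht i) (k i) = 1) ∧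
    (∀ (i : Fin t) (j : Fin n), (j : ℕ) < (k i : ℕ) → R (Fin.castLE ht i) j = 0) ∧
    (∀ (i : Fin t) (p : Fin m), (p : ℕ) ≠ (i : ℕ) → R p (k i) = 0)

/-- `C` is a right column reduced echelon matrix: its transpose is left row reduced
echelon (columns of `C` beyond the first `t` are zero, each of the first `t` columns has
first-from-the-top nonzero entry `1` located in row `k j`, the `k j` strictly increase,
and row `k j` is zero outside column `j`). -/
def IsColReducedEchelon {D : Type*} [DivisionRing D] {m n : ℕ}
    (C : Matrix (Fin m) (Fin n) D) : Prop :=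
  IsRowReducedEchelon Cᵀ

/-- `A` is upper triangular: the `(i,j)` entry vanishes whenever `i > j`. -/
def IsUpperTriangular {D : Type*} [Zero D] {m n : ℕ} (A : Matrix (Fin m) (Fin n) D) : Prop :=
  ∀ (i : Fin m) (j : Fin n), (j : ℕ) < (i : ℕ) → A i j = 0

/-- The index at which block `i` of the partition `M` starts. -/
def blockStart {r : ℕ} (M : Fin r → ℕ) (i : Fin r) : ℕ :=
  ∑ t ∈ Finset.Iio i, M t

theorem blockStart_add_lt {r : ℕ} (M : Fin r → ℕ) (i : Fin r) (a : Fin (M i)) :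
    blockStart M i + (a : ℕ) < ∑ t, M t := by
  have h2 : (a : ℕ) < M i := a.2
  have h1 : blockStart M i + M i ≤ ∑ t, M t := by
    have hins : i ∉ Finset.Iio i := by simp
    calc blockStart M i + M i = ∑ t ∈ insert i (Finset.Iio i), M t := by
          rw [Finset.sum_insert hins, blockStart, add_comm]
      _ ≤ ∑ t, M t := Finset.sum_le_sum_of_subset (Finset.subset_univ _)
  omega

/-- The global (row or column) index of the `a`-th entry of the `i`-th block of the
partition `M`. -/
def blockIdx {r : ℕ} (M : Fin r → ℕ) (i : Fin r) (a : Fin (M i)) : Fin (∑ t, M t) :=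
  ⟨blockStart M i + (a : ℕ), blockStart_add_lt M i a⟩

/-- Membership in the nest module `T_{(M,N)}(D)`: the `(i,j)` block vanishes whenever
`i > j`. -/
def IsNest {D : Type*} [Zero D] {r s : ℕ} (M : Fin r → ℕ) (N : Fin s → ℕ)
    (A : Matrix (Fin (∑ t, M t)) (Fin (∑ t, N t)) D) : Prop :=
  ∀ (i : Fin r) (j : Fin s) (a : Fin (M i)) (b : Fin (N j)),
    (j : ℕ) < (i : ℕ) → A (blockIdx M i a) (blockIdx N j b) = 0

/-- The `i`-th block row of a matrix whose rows are partitioned according to `M`. -/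
def blockRow {D : Type*} {r n : ℕ} (M : Fin r → ℕ)
    (A : Matrix (Fin (∑ t, M t)) (Fin n) D) (i : Fin r) :
    Matrix (Fin (M i)) (Fin n) D :=
  fun a q => A (blockIdx M i a) q

/-- The `j`-th block column of a matrix whose columns are partitioned according to `N`. -/
def blockCol {D : Type*} {s m : ℕ} (N : Fin s → ℕ)
    (A : Matrix (Fin m) (Fin (∑ t, N t)) D) (j : Fin s) :
    Matrix (Fin m) (Fin (N j)) D :=
  fun p b => A p (blockIdx N j b)

open MulOpposite

section RowReducedEchelon

variable {D : Type*} [DivisionRing D] {m n : ℕ}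

structure IsRowReducedEchelonWith (R : Matrix (Fin m) (Fin n) D) {t : ℕ} (ht : t ≤ m)
    (k : Fin t → Fin n) : Prop where
  strictMono : StrictMono k
  row_eq_zero : ∀ i : Fin m, t ≤ (i : ℕ) → R i = 0
  apply_pivot_self : ∀ i : Fin t, R (Fin.castLE ht i) (k i) = 1
  apply_of_lt_pivot : ∀ (i : Fin t) (j : Fin n), (j : ℕ) < (k i : ℕ) → R (Fin.castLE ht i) j = 0
  apply_pivot_of_ne : ∀ (i : Fin t) (p : Fin m), (p : ℕ) ≠ (i : ℕ) → R p (k i) = 0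

theorem isRowReducedEchelon_iff {R : Matrix (Fin m) (Fin n) D} :
    IsRowReducedEchelon R ↔
      ∃ (t : ℕ) (ht : t ≤ m) (k : Fin t → Fin n), IsRowReducedEchelonWith R ht k :=
  ⟨fun ⟨t, ht, k, h₁, h₂, h₃, h₄, h₅⟩ => ⟨t, ht, k, ⟨h₁, h₂, h₃, h₄, h₅⟩⟩,
    fun ⟨t, ht, k, ⟨h₁, h₂, h₃, h₄, h₅⟩⟩ => ⟨t, ht, k, h₁, h₂, h₃, h₄, h₅⟩⟩

def IsPivot (W : Submodule Dᵐᵒᵖ (Fin n → D)) (l : Fin n) : Prop :=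
  ∃ v ∈ W, v l ≠ 0 ∧ ∀ l' < l, v l' = 0

theorem eq_zero_of_forall_isPivot {W : Submodule Dᵐᵒᵖ (Fin n → D)} {v : Fin n → D}
    (hv : v ∈ W) (h : ∀ l, IsPivot W l → v l = 0) : v = 0 := by
  funext l
  induction l using WellFoundedLT.induction with
  | _ l ih => by_contra hl; exact hl (h l ⟨v, hv, hl, ih⟩)

theorem IsPivot.exists_mem_reduced {W : Submodule Dᵐᵒᵖ (Fin n → D)} {l : Fin n}
    (hl : IsPivot W l) :
    ∃ e ∈ W, (∀ l', IsPivot W l' → e l' = if l' = l then 1 else 0) ∧ ∀ l' < l, e l' = 0 := by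
  classical
  induction l using WellFoundedGT.induction with
  | _ l ih =>
  choose! f hfW hf hflt using fun l' (hl' : l < l') (hp : IsPivot W l') => ih l' hl' hp
  obtain ⟨v, hvW, hvl, hv⟩ := hl
  set u := op (v l)⁻¹ • v
  have hul : u l = 1 := by simp [u, smul_eq_mul_unop, hvl]
  have hu_lt : ∀ l' < l, u l' = 0 := fun l' hl' => by simp [u, hv l' hl']
  set S := Finset.univ.filter (fun l' => l < l' ∧ IsPivot W l')
  have hS : ∀ c ∈ S, l < c ∧ IsPivot W c := fun c hc => (Finset.mem_filter.1 hc).2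
  -- subtract from `u` its entries at the later pivots, using the reduced vectors given by `ih`
  refine ⟨u - ∑ l' ∈ S, op (u l') • f l', ?_, fun l'' hl'' => ?_, fun l' hl' => ?_⟩
  · exact W.sub_mem (W.smul_mem _ hvW) (W.sum_mem fun c hc =>
      W.smul_mem _ (hfW c (hS c hc).1 (hS c hc).2))
  · have hsum : (∑ l' ∈ S, op (u l') • f l') l'' = if l'' ∈ S then u l'' else 0 := by
      rw [Finset.sum_apply, ← Finset.sum_ite_eq]
      refine Finset.sum_congr rfl fun c hc => ?_
      simp [smul_eq_mul_unop, hf c (hS c hc).1 (hS c hc).2 l'' hl'']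
    rw [Pi.sub_apply, hsum]
    rcases lt_trichotomy l'' l with h | rfl | h
    · simp [S, hu_lt l'' h, h.ne, not_lt_of_gt h]
    · simp [S, hul]
    · simp [S, h, hl'', h.ne']
  · rw [Pi.sub_apply, hu_lt l' hl', zero_sub, neg_eq_zero, Finset.sum_apply]
    refine Finset.sum_eq_zero fun c hc => ?_
    simp [hflt c (hS c hc).1 (hS c hc).2 l' (hl'.trans (hS c hc).1)]

namespace IsRowReducedEchelonWith

variable {R : Matrix (Fin m) (Fin n) D} {t : ℕ} {ht : t ≤ m} {k : Fin t → Fin n}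

theorem apply_pivot (hR : IsRowReducedEchelonWith R ht k) (p : Fin m) (i : Fin t) :
    R p (k i) = if (p : ℕ) = i then 1 else 0 := by
  split_ifs with h
  · obtain rfl : p = Fin.castLE ht i := Fin.ext h
    exact hR.apply_pivot_self i
  · exact hR.apply_pivot_of_ne i p h

theorem eq_sum_of_mem_span (hR : IsRowReducedEchelonWith R ht k) {v : Fin n → D}
    (hv : v ∈ Submodule.span Dᵐᵒᵖ (Set.range R)) :
    v = ∑ i : Fin t, op (v (k i)) • R (Fin.castLE ht i) := by
  induction hv using Submodule.span_induction with
  | mem v hv =>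
    obtain ⟨p, rfl⟩ := hv
    simp_rw [hR.apply_pivot, apply_ite op, op_one, op_zero, ite_smul, one_smul, zero_smul]
    by_cases hp : (p : ℕ) < t
    · obtain ⟨i, rfl⟩ : ∃ i : Fin t, Fin.castLE ht i = p := ⟨⟨p, hp⟩, rfl⟩
      simp [Fin.val_inj]
    · have hne : ∀ i : Fin t, (p : ℕ) ≠ i := fun i => by omega
      simp [hne, hR.row_eq_zero p (not_lt.1 hp)]
  | zero => simp
  | add v w _ _ hv hw =>
    simp only [Pi.add_apply, op_add, add_smul, Finset.sum_add_distrib]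
    rw [← hv, ← hw]
  | smul c v _ hv =>
    simp only [Pi.smul_apply, smul_eq_mul_unop, op_mul, op_unop, mul_smul, ← Finset.smul_sum]
    rw [← hv]

theorem eq_of_forall_apply_pivot_eq (hR : IsRowReducedEchelonWith R ht k) {v w : Fin n → D}
    (hv : v ∈ Submodule.span Dᵐᵒᵖ (Set.range R)) (hw : w ∈ Submodule.span Dᵐᵒᵖ (Set.range R))
    (h : ∀ i, v (k i) = w (k i)) : v = w := by
  rw [hR.eq_sum_of_mem_span hv, hR.eq_sum_of_mem_span hw]
  simp only [h]

theorem isPivot_span_iff (hR : IsRowReducedEchelonWith R ht k) {l : Fin n} :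
    IsPivot (Submodule.span Dᵐᵒᵖ (Set.range R)) l ↔ l ∈ Set.range k := by
  constructor
  · rintro ⟨v, hv, hvl, hv_lt⟩
    by_contra hl
    refine hvl ?_
    rw [hR.eq_sum_of_mem_span hv, Finset.sum_apply]
    refine Finset.sum_eq_zero fun i _ => ?_
    rcases lt_or_gt_of_ne (fun h => hl ⟨i, h⟩ : k i ≠ l) with h | h
    · simp [hv_lt _ h]
    · simp [hR.apply_of_lt_pivot i l h]
  · rintro ⟨i, rfl⟩
    refine ⟨R (Fin.castLE ht i), Submodule.subset_span ⟨_, rfl⟩, ?_, hR.apply_of_lt_pivot i⟩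
    simp [hR.apply_pivot_self]

theorem span_eq {W : Submodule Dᵐᵒᵖ (Fin n → D)} (hR : IsRowReducedEchelonWith R ht k)
    (hRW : ∀ p, R p ∈ W) (hk : ∀ l, IsPivot W l → l ∈ Set.range k) :
    Submodule.span Dᵐᵒᵖ (Set.range R) = W := by
  refine le_antisymm (Submodule.span_le.2 (Set.range_subset_iff.2 hRW)) fun w hw => ?_
  set w' := ∑ i : Fin t, op (w (k i)) • R (Fin.castLE ht i)
  have hw' : w' ∈ Submodule.span Dᵐᵒᵖ (Set.range R) :=
    Submodule.sum_mem _ fun i _ => Submodule.smul_mem _ _ (Submodule.subset_span ⟨_, rfl⟩)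
  -- `w - w'` lies in `W` and vanishes at every pivot of `W`
  have : w - w' = 0 := by
    refine eq_zero_of_forall_isPivot (W.sub_mem hw (Submodule.span_le.2
      (Set.range_subset_iff.2 hRW) hw')) fun l hl => ?_
    obtain ⟨j, rfl⟩ := hk l hl
    simp [w', Finset.sum_apply, smul_eq_mul_unop, hR.apply_pivot, Fin.val_inj]
  rwa [sub_eq_zero.1 this]

end IsRowReducedEchelonWith

theorem IsRowReducedEchelon.eq_of_span_eq {R R' : Matrix (Fin m) (Fin n) D}
    (hR : IsRowReducedEchelon R) (hR' : IsRowReducedEchelon R')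
    (h : Submodule.span Dᵐᵒᵖ (Set.range R) = Submodule.span Dᵐᵒᵖ (Set.range R')) : R = R' := by
  obtain ⟨t, ht, k, hR⟩ := isRowReducedEchelon_iff.1 hR
  obtain ⟨t', ht', k', hR'⟩ := isRowReducedEchelon_iff.1 hR'
  have hrange : Set.range k = Set.range k' := by
    ext l
    rw [← hR.isPivot_span_iff, ← hR'.isPivot_span_iff, h]
  obtain rfl : t = t' := by
    simpa [Set.ncard_range_of_injective hR.strictMono.injective,
      Set.ncard_range_of_injective hR'.strictMono.injective] using congrArg Set.ncard hrange
  obtain rfl : k = k' := (hR.strictMono.range_inj hR'.strictMono).1 hrange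
  funext p
  refine hR.eq_of_forall_apply_pivot_eq (Submodule.subset_span ⟨p, rfl⟩)
    (by rw [h]; exact Submodule.subset_span ⟨p, rfl⟩) fun i => ?_
  rw [hR.apply_pivot, hR'.apply_pivot]

theorem exists_isRowReducedEchelon_span_eq (W : Submodule Dᵐᵒᵖ (Fin n → D)) :
    ∃ R : Matrix (Fin n) (Fin n) D,
      IsRowReducedEchelon R ∧ Submodule.span Dᵐᵒᵖ (Set.range R) = W := by
  classical
  set P := Finset.univ.filter (IsPivot W)
  have ht : P.card ≤ n := by simpa using P.card_le_univ
  set k := P.orderEmbOfFin rfl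
  have hk : ∀ l, IsPivot W l ↔ l ∈ Set.range k := fun l => by
    rw [Finset.range_orderEmbOfFin]
    simp [P]
  have hk_pivot : ∀ i, IsPivot W (k i) := fun i => (hk _).2 ⟨i, rfl⟩
  choose! e heW he he_lt using fun l (hl : IsPivot W l) => hl.exists_mem_reduced
  let R : Matrix (Fin n) (Fin n) D := fun p => if h : (p : ℕ) < P.card then e (k ⟨p, h⟩) else 0
  have hR_castLE : ∀ i, R (Fin.castLE ht i) = e (k i) := fun i => dif_pos i.2
  have hR : IsRowReducedEchelonWith R ht k :=
    { strictMono := k.strictMono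
      row_eq_zero := fun p hp => dif_neg (not_lt.2 hp)
      apply_pivot_self := fun i => by simp [hR_castLE, he _ (hk_pivot i) _ (hk_pivot i)]
      apply_of_lt_pivot := fun i j hj => by rw [hR_castLE]; exact he_lt _ (hk_pivot i) j hj
      apply_pivot_of_ne := fun i p hp => by
        by_cases h : (p : ℕ) < P.card
        · simp [R, h, he _ (hk_pivot _) _ (hk_pivot i), Fin.ext_iff, Ne.symm hp]
        · simp [R, h] }
  refine ⟨R, isRowReducedEchelon_iff.2 ⟨_, ht, k, hR⟩, hR.span_eq (fun p => ?_) fun l => (hk l).1⟩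
  by_cases h : (p : ℕ) < P.card
  · simpa [R, h] using heW _ (hk_pivot _)
  · simp [R, h]

end RowReducedEchelon

section ColReducedEchelon

variable {D : Type*} [DivisionRing D] {m : ℕ}

theorem IsColReducedEchelon.eq_of_RCS_eq {n : ℕ} {C C' : Matrix (Fin m) (Fin n) D}
    (hC : IsColReducedEchelon C) (hC' : IsColReducedEchelon C') (h : RCS C = RCS C') :
    C = C' :=
  transpose_injective (hC.eq_of_span_eq hC' h)

theorem exists_isColReducedEchelon_RCS_eq (W : Submodule Dᵐᵒᵖ (Fin m → D)) :
    ∃ C : Matrix (Fin m) (Fin m) D, IsColReducedEchelon C ∧ RCS C = W := by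
  obtain ⟨R, hR, hRW⟩ := exists_isRowReducedEchelon_span_eq W
  exact ⟨Rᵀ, by rwa [IsColReducedEchelon, transpose_transpose],
    by rwa [RCS, transpose_transpose]⟩

theorem mem_RCS_iff {ι : Type*} [Fintype ι] {C : Matrix (Fin m) ι D} {v : Fin m → D} :
    v ∈ RCS C ↔ ∃ y, C *ᵥ y = v := by
  refine (Submodule.mem_span_range_iff_exists_fun Dᵐᵒᵖ).trans ⟨?_, ?_⟩
  · rintro ⟨c, rfl⟩
    exact ⟨fun i => unop (c i), by simp [mulVec_eq_sum]⟩
  · rintro ⟨y, rfl⟩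
    exact ⟨fun i => op (y i), (mulVec_eq_sum _ _).symm⟩

theorem exists_eq_mul_iff_forall_mem_RCS {ι κ : Type*} [Fintype ι] {C : Matrix (Fin m) ι D}
    {B : Matrix (Fin m) κ D} : (∃ Y, B = C * Y) ↔ ∀ b, Bᵀ b ∈ RCS C := by
  simp only [mem_RCS_iff]
  constructor
  · rintro ⟨Y, rfl⟩ b
    exact ⟨Yᵀ b, rfl⟩
  · intro h
    choose y hy using h
    exact ⟨(of y)ᵀ, by ext p b; exact (congrFun (hy b) p).symm⟩

end ColReducedEchelon

section Blocks

theorem blockIdx_eq_finSigmaFinEquiv {r : ℕ} (M : Fin r → ℕ) (i : Fin r) (a : Fin (M i)) :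
    blockIdx M i a = finSigmaFinEquiv ⟨i, a⟩ := by
  ext
  simp only [blockIdx, blockStart, finSigmaFinEquiv_apply, add_left_inj]
  have : Finset.Iio i = Finset.univ.map (Fin.castLEEmb i.2.le) := by
    ext x
    simp only [Finset.mem_Iio, Finset.mem_map, Finset.mem_univ, true_and]
    exact ⟨fun h => ⟨⟨x, h⟩, rfl⟩, by rintro ⟨y, rfl⟩; exact y.2⟩
  rw [this, Finset.sum_map]
  rfl

theorem eq_of_blockIdx_eq {r : ℕ} {M : Fin r → ℕ} {i j : Fin r} {a : Fin (M i)}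
    {b : Fin (M j)} (h : blockIdx M i a = blockIdx M j b) : i = j := by
  rw [blockIdx_eq_finSigmaFinEquiv, blockIdx_eq_finSigmaFinEquiv] at h
  exact congrArg Sigma.fst (finSigmaFinEquiv.injective h)

theorem exists_blockIdx_eq {r : ℕ} (M : Fin r → ℕ) (q : Fin (∑ t, M t)) :
    ∃ i a, blockIdx M i a = q := by
  obtain ⟨⟨i, a⟩, rfl⟩ := finSigmaFinEquiv.surjective q
  exact ⟨i, a, blockIdx_eq_finSigmaFinEquiv M i a⟩

theorem isNest_single {D : Type*} [Zero D] {r s : ℕ} {M : Fin r → ℕ} {N : Fin s → ℕ}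
    {i : Fin r} {j : Fin s} (a : Fin (M i)) (b : Fin (N j)) (c : D) (h : (i : ℕ) ≤ j) :
    IsNest M N (single (blockIdx M i a) (blockIdx N j b) c) := by
  intro i' j' a' b' hlt
  rw [single_apply_of_ne]
  rintro ⟨hi, hj⟩
  obtain rfl := eq_of_blockIdx_eq hi
  obtain rfl := eq_of_blockIdx_eq hj
  omega

end Blocks

section UpdateCol

variable {D : Type*} {l m n : Type*} [DecidableEq n]

theorem updateCol_zero_add [AddZeroClass D] (q : n) (v w : l → D) :
    updateCol (0 : Matrix l n D) q (v + w) = updateCol 0 q v + updateCol 0 q w := by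
  ext p x
  by_cases hx : x = q <;> simp [hx]

theorem transpose_updateCol_zero_apply [Zero D] (q q' : n) (v : l → D) :
    (updateCol (0 : Matrix l n D) q v)ᵀ q' = if q' = q then v else 0 := by
  ext p
  by_cases hq : q' = q <;> simp [hq]

theorem sum_updateCol_zero_transpose [AddCommMonoid D] [Fintype n] (A : Matrix l n D) :
    ∑ q, updateCol 0 q (Aᵀ q) = A := by
  ext p x
  simp [Matrix.sum_apply, updateCol_apply]

theorem mul_single_eq_updateCol [Semiring D] [Fintype m] [DecidableEq m] (A : Matrix l m D)
    (q : m) (q' : n) (c : D) : A * single q q' c = updateCol 0 q' (op c • Aᵀ q) := by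
  ext p x
  by_cases hx : x = q' <;> simp [hx]

end UpdateCol

section NestModule

variable {D : Type*} [DivisionRing D] {m s : ℕ} {N : Fin s → ℕ}

def IsNestRightSubmodule (N : Fin s → ℕ) (J : AddSubgroup (Matrix (Fin m) (Fin (∑ t, N t)) D)) :
    Prop :=
  ∀ (A : Matrix (Fin m) (Fin (∑ t, N t)) D) (Q : Matrix (Fin (∑ t, N t)) (Fin (∑ t, N t)) D),
    IsNest N N Q → A ∈ J → A * Q ∈ J

def blockColSpan (N : Fin s → ℕ) (J : AddSubgroup (Matrix (Fin m) (Fin (∑ t, N t)) D))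
    (j : Fin s) : Submodule Dᵐᵒᵖ (Fin m → D) :=
  Submodule.span Dᵐᵒᵖ {v | ∃ A ∈ J, ∃ b, Aᵀ (blockIdx N j b) = v}

def blockColsIn (N : Fin s → ℕ) (V : Fin s → Submodule Dᵐᵒᵖ (Fin m → D)) :
    Set (Matrix (Fin m) (Fin (∑ t, N t)) D) :=
  {A | ∀ j b, Aᵀ (blockIdx N j b) ∈ V j}

theorem setOf_blockCol_eq_mul {ι : Type*} [Fintype ι] (C : Fin s → Matrix (Fin m) ι D) :
    {A : Matrix (Fin m) (Fin (∑ t, N t)) D |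
      ∀ j, ∃ Y : Matrix ι (Fin (N j)) D, blockCol N A j = C j * Y} =
      blockColsIn N fun j => RCS (C j) := by
  ext A
  exact forall_congr' fun j => exists_eq_mul_iff_forall_mem_RCS

theorem blockColsIn_injective (hN : ∀ j, 0 < N j) :
    Function.Injective (blockColsIn (D := D) (m := m) N) := by
  suffices h : ∀ V V', blockColsIn N V ⊆ blockColsIn N V' → V ≤ V' from
    fun V V' hV => le_antisymm (h V V' hV.subset) (h V' V hV.symm.subset)
  intro V V' h j v hv
  set q := blockIdx N j ⟨0, hN j⟩
  have hmem : updateCol 0 q v ∈ blockColsIn N V := by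
    intro j' b
    rw [transpose_updateCol_zero_apply]
    split_ifs with hq
    · obtain rfl := eq_of_blockIdx_eq hq
      exact hv
    · exact zero_mem _
  simpa [q, transpose_updateCol_zero_apply] using h hmem j ⟨0, hN j⟩

variable {J : AddSubgroup (Matrix (Fin m) (Fin (∑ t, N t)) D)}

theorem updateCol_zero_mem_of_mem_blockColSpan
    (hJ : IsNestRightSubmodule N J) {j : Fin s} {v : Fin m → D}
    (hv : v ∈ blockColSpan N J j) (b : Fin (N j)) :
    updateCol 0 (blockIdx N j b) v ∈ J := by
  induction hv using Submodule.span_induction with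
  | mem v hv =>
    obtain ⟨A, hA, b', rfl⟩ := hv
    have := hJ A _ (isNest_single b' b 1 le_rfl) hA
    rwa [mul_single_eq_updateCol, op_one, one_smul] at this
  | zero => simp
  | add v w _ _ hv hw => simpa [updateCol_zero_add] using J.add_mem hv hw
  | smul c v _ hv =>
    have := hJ _ _ (isNest_single b b (unop c) le_rfl) hv
    rwa [mul_single_eq_updateCol, transpose_updateCol_zero_apply, if_pos rfl, op_unop] at this

theorem blockColSpan_mono (hJ : IsNestRightSubmodule N J) {j j' : Fin s}
    (hN : 0 < N j') (h : j ≤ j') : blockColSpan N J j ≤ blockColSpan N J j' := by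
  refine Submodule.span_le.2 ?_
  rintro _ ⟨A, hA, b, rfl⟩
  refine Submodule.subset_span ⟨A * single (blockIdx N j b) (blockIdx N j' ⟨0, hN⟩) 1,
    hJ _ _ (isNest_single _ _ _ h) hA, ⟨0, hN⟩, ?_⟩
  rw [mul_single_eq_updateCol, transpose_updateCol_zero_apply, if_pos rfl, op_one, one_smul]

theorem coe_eq_blockColsIn_blockColSpan (hJ : IsNestRightSubmodule N J) :
    (J : Set (Matrix (Fin m) (Fin (∑ t, N t)) D)) = blockColsIn N (blockColSpan N J) := by
  ext A
  refine ⟨fun hA j b => Submodule.subset_span ⟨A, hA, b, rfl⟩, fun hA => ?_⟩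
  rw [SetLike.mem_coe, ← sum_updateCol_zero_transpose A]
  refine J.sum_mem fun q _ => ?_
  obtain ⟨j, b, rfl⟩ := exists_blockIdx_eq N q
  exact updateCol_zero_mem_of_mem_blockColSpan hJ (hA j b) b

theorem apply_eq_zero_of_mem_blockColSpan {r : ℕ} {M : Fin r → ℕ}
    {J : AddSubgroup (Matrix (Fin (∑ t, M t)) (Fin (∑ t, N t)) D)}
    (hJT : ∀ A ∈ J, IsNest M N A) {j : Fin s} {v : Fin (∑ t, M t) → D}
    (hv : v ∈ blockColSpan N J j) {i : Fin r} (hji : (j : ℕ) < i) (a : Fin (M i)) :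
    v (blockIdx M i a) = 0 := by
  induction hv using Submodule.span_induction with
  | mem v hv =>
    obtain ⟨A, hA, b, rfl⟩ := hv
    exact hJT A hA i j a b hji
  | zero => rfl
  | add v w _ _ hv hw => simp [hv, hw]
  | smul c v _ hv => simp [hv]

end NestModule

theorem rightSubmodule_nest_exists_unique_echelon_seq_general
    (D : Type*) [DivisionRing D] (r s : ℕ) (M : Fin r → ℕ) (N : Fin s → ℕ)
    (hN : ∀ j, 0 < N j)
    (J : AddSubgroup (Matrix (Fin (∑ t, M t)) (Fin (∑ t, N t)) D))
    (hJT : ∀ A ∈ J, IsNest M N A)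
    (hJ : ∀ (A : Matrix (Fin (∑ t, M t)) (Fin (∑ t, N t)) D)
      (Q : Matrix (Fin (∑ t, N t)) (Fin (∑ t, N t)) D),
      IsNest N N Q → A ∈ J → A * Q ∈ J) :
    ∃! C : Fin s → Matrix (Fin (∑ t, M t)) (Fin (∑ t, M t)) D,
      (∀ j, IsColReducedEchelon (C j)) ∧
      (∀ (j : Fin s) (hj : (j : ℕ) + 1 < s), RCS (C j) ≤ RCS (C ⟨(j : ℕ) + 1, hj⟩)) ∧
      (∀ (j : Fin s) (i : Fin r), (j : ℕ) < (i : ℕ) →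
        ∀ (a : Fin (M i)) (q : Fin (∑ t, M t)), C j (blockIdx M i a) q = 0) ∧
      (J : Set (Matrix (Fin (∑ t, M t)) (Fin (∑ t, N t)) D)) =
        {A | ∀ j : Fin s, ∃ Y : Matrix (Fin (∑ t, M t)) (Fin (N j)) D,
          blockCol N A j = C j * Y} := by
  have hJW := coe_eq_blockColsIn_blockColSpan hJ
  choose C hC hCW using fun j => exists_isColReducedEchelon_RCS_eq (blockColSpan N J j)
  refine ⟨C, ⟨hC, fun j hj => ?_, fun j i hji a q => ?_, ?_⟩, ?_⟩
  · rw [hCW, hCW]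
    exact blockColSpan_mono hJ (hN _) (Fin.le_def.2 (Nat.le_succ _))
  · have hq : (C j)ᵀ q ∈ blockColSpan N J j := hCW j ▸ Submodule.subset_span ⟨q, rfl⟩
    exact apply_eq_zero_of_mem_blockColSpan hJT hq hji a
  · rw [setOf_blockCol_eq_mul, hJW]
    simp only [hCW]
  · rintro C' ⟨hC', -, -, hC'J⟩
    have hRCS : (fun j => RCS (C' j)) = blockColSpan N J :=
      blockColsIn_injective hN (by rw [← setOf_blockCol_eq_mul, ← hC'J, hJW])
    funext j
    exact (hC' j).eq_of_RCS_eq (hC j) ((congrFun hRCS j).trans (hCW j).symm)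

/-- Every right submodule `J` of the nest module `T_{(M,N)}(D)` is
described by a unique sequence `(C_1, …, C_s)` of right column reduced echelon matrices
in `M_m(D)` with increasing column spaces, whose `i`-th block rows vanish for `i > j`,
via `J = {A : Col_j(A) ∈ C_j·M_{m×n_j}(D) for all j}`. -/
theorem rightSubmodule_nest_exists_unique_echelon_seq
    (D : Type*) [DivisionRing D] (r s : ℕ) (M : Fin r → ℕ) (N : Fin s → ℕ)
    (hM : ∀ i, 0 < M i) (hN : ∀ j, 0 < N j)
    (J : AddSubgroup (Matrix (Fin (∑ t, M t)) (Fin (∑ t, N t)) D))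
    (hJT : ∀ A ∈ J, IsNest M N A)
    (hJ : ∀ (A : Matrix (Fin (∑ t, M t)) (Fin (∑ t, N t)) D)
      (Q : Matrix (Fin (∑ t, N t)) (Fin (∑ t, N t)) D),
      IsNest N N Q → A ∈ J → A * Q ∈ J) :
    ∃! C : Fin s → Matrix (Fin (∑ t, M t)) (Fin (∑ t, M t)) D,
      (∀ j, IsColReducedEchelon (C j)) ∧
      (∀ (j : Fin s) (hj : (j : ℕ) + 1 < s), RCS (C j) ≤ RCS (C ⟨(j : ℕ) + 1, hj⟩)) ∧
      (∀ (j : Fin s) (i : Fin r), (j : ℕ) < (i : ℕ) →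
        ∀ (a : Fin (M i)) (q : Fin (∑ t, M t)), C j (blockIdx M i a) q = 0) ∧
      (J : Set (Matrix (Fin (∑ t, M t)) (Fin (∑ t, N t)) D)) =
        {A | ∀ j : Fin s, ∃ Y : Matrix (Fin (∑ t, M t)) (Fin (N j)) D,
          blockCol N A j = C j * Y} :=
  rightSubmodule_nest_exists_unique_echelon_seq_general D r s M N hN J hJT hJ
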